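/- arXiv:1103.5848 — 5 statements merged into one kernel-verified Lean document; each statement's English description precedes it below -/
import Mathlib

section
/- For the monic Laguerre polynomial L_n(x) = (b)_n · Σ_{m=0}^n (-1)^{m-n} · (n falling m) / ((b)_m · m!) · x^m, its squared norm with respect to the gamma distribution γ_b(dx) = (1/Γ(b)) x^{b-1} e^{-x} dx on [0,∞) equals (b)_n · n!, i.e. ∫_0^∞ L_n(x)^2 γ_b(dx) = (b)_n · n!. -/
/-!
The moments of the gamma distribution are `∫ xᵏ dγ_b = Γ(b + k) / Γ(b) = (b)ₖ`. Since
`(b)ₘ₊ⱼ = (b)ₘ (b + m)ⱼ` and `n↓m = m! C(n, m)`, this turns `∫ Lₙ xʲ dγ_b` into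
`(b)ₙ ∑ₘ (-1)ⁿ⁻ᵐ C(n, m) (b + m)ⱼ`, i.e. `(b)ₙ` times the `n`-th forward difference at `0` of the
monic degree-`j` polynomial `y ↦ (y + b)ⱼ`; it vanishes for `j < n` and equals `n!` for `j = n`.
As `Lₙ` is monic of degree `n`, `∫ Lₙ² dγ_b = ∫ Lₙ xⁿ dγ_b = (b)ₙ n!`.
-/

open MeasureTheory Finset Polynomial Set
open scoped Nat fwdDiff

/-- The monic Laguerre polynomial with parameter `b`, as a function of `x`:
`L_n(x) = (b)_n * ∑_{m=0}^n (-1)^{n-m} n↓m / ((b)_m m!) x^m`. -/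
noncomputable def laguerre (b : ℝ) (n : ℕ) (x : ℝ) : ℝ :=
  (ascPochhammer ℝ n).eval b *
    ∑ m ∈ Finset.range (n + 1),
      (-1 : ℝ) ^ (n - m) * (Nat.descFactorial n m : ℝ) /
        ((ascPochhammer ℝ m).eval b * (Nat.factorial m : ℝ)) * x ^ m

section FwdDiff

variable {R : Type*} [CommRing R] [IsDomain R]

theorem fwdDiff_iter_ascPochhammer_eval_add_eq_zero_of_lt (c : R) {j n : ℕ} (h : j < n) :
    (Δ_[1])^[n] (fun y ↦ (ascPochhammer R j).eval (y + c)) = 0 := by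
  have hdeg : ((ascPochhammer R j).comp (X + C c)).natDegree < n := by
    rwa [natDegree_comp, ascPochhammer_natDegree, natDegree_X_add_C, mul_one]
  simpa [eval_comp] using fwdDiff_iter_eq_zero_of_degree_lt hdeg

theorem fwdDiff_iter_ascPochhammer_eval_add_self (c : R) (n : ℕ) :
    (Δ_[1])^[n] (fun y ↦ (ascPochhammer R n).eval (y + c)) = fun _ ↦ (n ! : R) := by
  have hmonic := (monic_ascPochhammer (S := R) n).comp_X_add_C c
  have hdeg : ((ascPochhammer R n).comp (X + C c)).natDegree = n := by
    rw [natDegree_comp, ascPochhammer_natDegree, natDegree_X_add_C, mul_one]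
  have := fwdDiff_iter_degree_eq_factorial ((ascPochhammer R n).comp (X + C c))
  rw [hdeg, hmonic.leadingCoeff, one_smul] at this
  ext y
  simpa [eval_comp] using congrFun this y

end FwdDiff

theorem Real.Gamma_add_nat_eq_ascPochhammer_mul {b : ℝ} (hb : 0 < b) (k : ℕ) :
    Real.Gamma (b + k) = (ascPochhammer ℝ k).eval b * Real.Gamma b := by
  induction k with
  | zero => simp
  | succ k ih =>
    rw [Nat.cast_succ, ← add_assoc, Real.Gamma_add_one (by positivity), ih,
      ascPochhammer_succ_eval]
    ring

noncomputable def gammaDensity (b x : ℝ) : ℝ := x ^ (b - 1) * Real.exp (-x) / Real.Gamma b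

section GammaMoments

variable {b : ℝ}

theorem pow_mul_gammaDensity {x : ℝ} (hx : 0 < x) (k : ℕ) :
    x ^ k * gammaDensity b x = Real.exp (-x) * x ^ (b + k - 1) / Real.Gamma b := by
  rw [gammaDensity, add_sub_right_comm, Real.rpow_add_natCast hx.ne']
  ring

theorem integrableOn_pow_mul_gammaDensity (hb : 0 < b) (k : ℕ) :
    IntegrableOn (fun x ↦ x ^ k * gammaDensity b x) (Ioi 0) :=
  IntegrableOn.congr_fun ((Real.GammaIntegral_convergent (by positivity)).div_const _)
    (fun _ hx ↦ (pow_mul_gammaDensity hx k).symm) measurableSet_Ioi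

theorem integral_pow_mul_gammaDensity (hb : 0 < b) (k : ℕ) :
    ∫ x in Ioi 0, x ^ k * gammaDensity b x = (ascPochhammer ℝ k).eval b := by
  rw [setIntegral_congr_fun measurableSet_Ioi (fun _ hx ↦ pow_mul_gammaDensity hx k),
    integral_div, ← Real.Gamma_eq_integral (by positivity),
    Real.Gamma_add_nat_eq_ascPochhammer_mul hb,
    mul_div_cancel_right₀ _ (Real.Gamma_pos_of_pos hb).ne']

variable {ι : Type*} (s : Finset ι) (a : ι → ℝ) (e : ι → ℕ)

theorem integrableOn_sum_mul_pow_mul_gammaDensity (hb : 0 < b) :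
    IntegrableOn (fun x ↦ (∑ i ∈ s, a i * x ^ e i) * gammaDensity b x) (Ioi 0) := by
  simp_rw [sum_mul, mul_assoc]
  exact integrable_finsetSum s fun i _ ↦ (integrableOn_pow_mul_gammaDensity hb (e i)).const_mul _

theorem integral_sum_mul_pow_mul_gammaDensity (hb : 0 < b) :
    ∫ x in Ioi 0, (∑ i ∈ s, a i * x ^ e i) * gammaDensity b x =
      ∑ i ∈ s, a i * (ascPochhammer ℝ (e i)).eval b := by
  simp_rw [sum_mul, mul_assoc]
  rw [integral_finsetSum s fun i _ ↦ (integrableOn_pow_mul_gammaDensity hb (e i)).const_mul _]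
  simp_rw [integral_const_mul, integral_pow_mul_gammaDensity hb]

end GammaMoments

noncomputable def laguerreCoeff (b : ℝ) (n m : ℕ) : ℝ :=
  (ascPochhammer ℝ n).eval b *
    ((-1) ^ (n - m) * n.descFactorial m / ((ascPochhammer ℝ m).eval b * m !))

theorem laguerre_mul_pow_eq_sum (b : ℝ) (n j : ℕ) (x : ℝ) :
    laguerre b n x * x ^ j = ∑ m ∈ range (n + 1), laguerreCoeff b n m * x ^ (m + j) := by
  rw [laguerre, mul_sum, sum_mul]
  refine sum_congr rfl fun m _ ↦ ?_
  rw [laguerreCoeff, pow_add]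
  ring

section Laguerre

variable {b : ℝ}

theorem laguerreCoeff_self (hb : 0 < b) (n : ℕ) : laguerreCoeff b n n = 1 := by
  have := (ascPochhammer_pos n b hb).ne'
  simp only [laguerreCoeff, Nat.sub_self, pow_zero, Nat.descFactorial_self, one_mul]
  field_simp

theorem laguerreCoeff_mul_ascPochhammer_eval (hb : 0 < b) (n m j : ℕ) :
    laguerreCoeff b n m * (ascPochhammer ℝ (m + j)).eval b =
      (ascPochhammer ℝ n).eval b *
        ((-1) ^ (n - m) * n.choose m * (ascPochhammer ℝ j).eval (m + b)) := by
  have := (ascPochhammer_pos m b hb).ne'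
  rw [laguerreCoeff, ← ascPochhammer_mul, eval_mul, eval_comp, eval_add, eval_X, eval_natCast,
    Nat.descFactorial_eq_factorial_mul_choose, add_comm b]
  push_cast
  field_simp

theorem sum_laguerreCoeff_mul_ascPochhammer_eval (hb : 0 < b) (n j : ℕ) :
    ∑ m ∈ range (n + 1), laguerreCoeff b n m * (ascPochhammer ℝ (m + j)).eval b =
      (ascPochhammer ℝ n).eval b * (Δ_[1])^[n] (fun y ↦ (ascPochhammer ℝ j).eval (y + b)) 0 := by
  rw [fwdDiff_iter_eq_sum_shift, mul_sum]
  refine sum_congr rfl fun m _ ↦ ?_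
  rw [laguerreCoeff_mul_ascPochhammer_eval hb]
  simp

theorem integrableOn_laguerre_mul_pow_mul_gammaDensity (hb : 0 < b) (n j : ℕ) :
    IntegrableOn (fun x ↦ laguerre b n x * x ^ j * gammaDensity b x) (Ioi 0) := by
  simp_rw [laguerre_mul_pow_eq_sum]
  exact integrableOn_sum_mul_pow_mul_gammaDensity _ _ _ hb

theorem integral_laguerre_mul_pow_mul_gammaDensity (hb : 0 < b) (n j : ℕ) :
    ∫ x in Ioi 0, laguerre b n x * x ^ j * gammaDensity b x =
      (ascPochhammer ℝ n).eval b * (Δ_[1])^[n] (fun y ↦ (ascPochhammer ℝ j).eval (y + b)) 0 := by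
  simp_rw [laguerre_mul_pow_eq_sum]
  rw [integral_sum_mul_pow_mul_gammaDensity _ _ _ hb, sum_laguerreCoeff_mul_ascPochhammer_eval hb]

theorem integral_laguerre_mul_pow_mul_gammaDensity_of_lt (hb : 0 < b) {n j : ℕ} (h : j < n) :
    ∫ x in Ioi 0, laguerre b n x * x ^ j * gammaDensity b x = 0 := by
  rw [integral_laguerre_mul_pow_mul_gammaDensity hb,
    fwdDiff_iter_ascPochhammer_eval_add_eq_zero_of_lt b h, Pi.zero_apply, mul_zero]

theorem integral_laguerre_mul_pow_self_mul_gammaDensity (hb : 0 < b) (n : ℕ) :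
    ∫ x in Ioi 0, laguerre b n x * x ^ n * gammaDensity b x = (ascPochhammer ℝ n).eval b * n ! := by
  rw [integral_laguerre_mul_pow_mul_gammaDensity hb, fwdDiff_iter_ascPochhammer_eval_add_self]

end Laguerre

/-- The squared norm of the monic Laguerre polynomial `L_n` with respect to the
gamma distribution `γ_b(dx) = x^(b-1) e^(-x)/Γ(b) dx` on `(0,∞)` equals `(b)_n n!`. -/
theorem laguerre_squared_norm (b : ℝ) (hb : 0 < b) (n : ℕ) :
    ∫ x in Set.Ioi (0 : ℝ),
        (laguerre b n x) ^ 2 * (x ^ (b - 1) * Real.exp (-x) / Real.Gamma b) =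
      (ascPochhammer ℝ n).eval b * (Nat.factorial n : ℝ) := by
  have hexpand : ∀ x, laguerre b n x ^ 2 * gammaDensity b x =
      ∑ m ∈ range (n + 1), laguerreCoeff b n m * (laguerre b n x * x ^ m * gammaDensity b x) := by
    intro x
    have hsum := laguerre_mul_pow_eq_sum b n 0 x
    simp only [pow_zero, mul_one, add_zero] at hsum
    rw [sq]
    nth_rewrite 2 [hsum]
    rw [mul_sum, sum_mul]
    exact sum_congr rfl fun m _ ↦ by ring
  change ∫ x in Ioi 0, laguerre b n x ^ 2 * gammaDensity b x = _
  simp_rw [hexpand]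
  rw [integral_finsetSum _ fun m _ ↦
    (integrableOn_laguerre_mul_pow_mul_gammaDensity hb n m).const_mul _]
  simp_rw [integral_const_mul]
  rw [sum_range_succ, sum_eq_zero fun m hm ↦ by
      rw [integral_laguerre_mul_pow_mul_gammaDensity_of_lt hb (mem_range.1 hm), mul_zero],
    zero_add, laguerreCoeff_self hb, one_mul, integral_laguerre_mul_pow_self_mul_gammaDensity hb]
end

section
/- Let {φ_n} and {φ'_n} be two sequences of monic polynomials with deg φ_n = n, related by φ_n = Σ_{m=0}^n t(n,m) φ'_m. For a partition ν with at most N parts, define φ_{ν|N}(x_1,…,x_N) = det[φ_{ν_i+N-i}(x_j)]_{i,j=1}^N / V_N(x), where V_N is the Vandermonde determinant. Then φ_{ν|N} = Σ_{μ ⊆ ν} t(ν,μ) φ'_{μ|N}, where t(ν,μ) = det[t(ν_i+N-i, μ_j+N-j)]_{i,j=1}^N. -/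
/-!
Write `λ_i = ν_i + (N - 1 - i)`. Expanding every `φ_{λ_i}` in the basis `φ'_m` factors the matrix
`[φ_{λ_i}(x_j)]` as `[t(λ_i, m)] · [φ'_m(x_j)]`, a product of an `N × L` and an `L × N` matrix, so
by the Cauchy–Binet formula its determinant is the sum, over strictly decreasing `μ`, of
`det[t(λ_i, μ_j)] · det[φ'_{μ_i}(x_j)]`. Since `t(n, m) = 0` for `m > n` and `λ` is decreasing,
`det[t(λ_i, μ_j)]` vanishes as soon as `λ_k < μ_k` for some `k`: the entries in rows `i ≥ k` and
columns `j ≤ k` are zero, and by pigeonhole every permutation meets this block. The strictly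
decreasing `μ ≤ λ` are exactly the `μ_i = ν'_i + (N - 1 - i)` with `ν' ⊆ ν` a partition.
-/

open scoped Classical

/-- The Vandermonde product `V_N(x) = ∏_{i<j} (x_i - x_j)`. -/
noncomputable def vandermondeProd {N : ℕ} (x : Fin N → ℝ) : ℝ :=
  ∏ i : Fin N, ∏ j ∈ Finset.univ.filter (fun j => i < j), (x i - x j)

open Finset Equiv

section StrictAnti

variable {N : ℕ}

theorem Function.Injective.exists_strictAnti_comp_perm {ι : Type*} [LinearOrder ι]
    {r : Fin N → ι} (hr : r.Injective) :
    ∃ μ : Fin N → ι, StrictAnti μ ∧ ∃ σ : Perm (Fin N), r = μ ∘ σ := by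
  have hsorted : StrictMono (r ∘ Tuple.sort r) :=
    (Tuple.monotone_sort r).strictMono_of_injective (hr.comp (Tuple.sort r).injective)
  refine ⟨r ∘ Fin.revPerm.trans (Tuple.sort r), fun i j hij => hsorted (Fin.rev_lt_rev.2 hij),
    (Fin.revPerm.trans (Tuple.sort r)).symm, ?_⟩
  ext i
  simp

theorem StrictAnti.comp_perm_inj {ι : Type*} [LinearOrder ι] {μ μ' : Fin N → ι}
    (hμ : StrictAnti μ) (hμ' : StrictAnti μ') {σ σ' : Perm (Fin N)} (h : μ ∘ σ = μ' ∘ σ') :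
    μ = μ' ∧ σ = σ' := by
  obtain rfl : μ = μ' := (hμ.range_inj hμ').1 <| by
    rw [← σ.surjective.range_comp, h, σ'.surjective.range_comp]
  exact ⟨rfl, Equiv.ext fun i => hμ.injective (congrFun h i)⟩

theorem StrictAnti.antitone_add_val {μ : Fin N → ℕ} (hμ : StrictAnti μ) :
    Antitone fun i => μ i + (i : ℕ) := by
  cases N with
  | zero => exact fun i => i.elim0
  | succ n =>
    refine Fin.antitone_iff_succ_le.2 fun i => ?_
    have := hμ i.castSucc_lt_succ
    simp only [Fin.val_succ, Fin.val_castSucc]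
    omega

theorem StrictAnti.sub_one_sub_le {μ : Fin N → ℕ} (hμ : StrictAnti μ) (i : Fin N) :
    N - 1 - i ≤ μ i := by
  have hi := i.isLt
  have := hμ.antitone_add_val (show i ≤ ⟨N - 1, by omega⟩ from Fin.le_def.2 (by dsimp only; omega))
  simp only at this
  omega

end StrictAnti

namespace Matrix

variable {R : Type*} [CommRing R]

theorem det_of_sum_mul_eq_sum_piFinset {n ι : Type*} [Fintype n] [DecidableEq n]
    (s : Finset ι) (A : n → ι → R) (B : ι → n → R) :
    det (of fun i j => ∑ m ∈ s, A i m * B m j) =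
      ∑ r ∈ Fintype.piFinset fun _ => s, (∏ i, A i (r i)) * det (of fun i j => B (r i) j) := by
  have h := (detRowAlternating : (n → R) [⋀^n]→ₗ[R] R).toMultilinearMap.map_sum_finset
    (fun i m => A i m • B m) fun _ => s
  convert h using 2 with r
  · exact congrArg det (by ext i j; simp)
  · rw [← det_mul_column]
    rfl

/-- The Cauchy–Binet formula, with the `N`-element subsets of `s` listed decreasingly. -/
theorem det_of_sum_mul_eq_sum_strictAnti {ι : Type*} [LinearOrder ι] {N : ℕ} (s : Finset ι)
    (A : Fin N → ι → R) (B : ι → Fin N → R) :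
    det (of fun i j => ∑ m ∈ s, A i m * B m j) =
      ∑ μ ∈ Fintype.piFinset (fun _ => s) with StrictAnti μ,
        det (of fun i j => A i (μ j)) * det (of fun i j => B (μ i) j) := by
  set F : (Fin N → ι) → R := fun r => (∏ i, A i (r i)) * det (of fun i j => B (r i) j)
  have hsplit : ∀ μ : Fin N → ι, det (of fun i j => A i (μ j)) * det (of fun i j => B (μ i) j) =
      ∑ σ : Perm (Fin N), F (μ ∘ σ) := by
    intro μ
    rw [← det_transpose, det_apply', sum_mul]
    refine sum_congr rfl fun σ _ => ?_
    have hperm : det (of fun i j => B (μ (σ i)) j) =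
        (Perm.sign σ : ℤ) * det (of fun i j => B (μ i) j) :=
      det_permute σ (of fun i j => B (μ i) j)
    simp only [F, Function.comp_apply, hperm, transpose_apply, of_apply]
    ring
  rw [det_of_sum_mul_eq_sum_piFinset]
  simp_rw [hsplit]
  rw [← sum_product']
  symm
  refine sum_of_injOn (fun p => p.1 ∘ p.2) ?_ ?_ ?_ fun _ _ => rfl
  · rintro ⟨μ, σ⟩ hμσ ⟨μ', σ'⟩ hμσ' h
    simp only [coe_product, Set.mem_prod, coe_filter, Set.mem_ofPred_eq] at hμσ hμσ'
    obtain ⟨rfl, rfl⟩ := hμσ.1.2.comp_perm_inj hμσ'.1.2 h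
    rfl
  · rintro ⟨μ, σ⟩ hμσ
    simp only [coe_product, Set.mem_prod, coe_filter, Set.mem_ofPred_eq,
      Fintype.mem_piFinset] at hμσ
    simpa using fun i => hμσ.1.1 (σ i)
  · intro r hr hr_image
    by_contra hF
    have hinj : r.Injective := fun i j hij => by
      by_contra hne
      exact hF (by rw [det_zero_of_row_eq hne (congrArg B hij), mul_zero])
    obtain ⟨μ, hμ, σ, rfl⟩ := hinj.exists_strictAnti_comp_perm
    refine hr_image ⟨(μ, σ), ?_, rfl⟩
    simp only [coe_product, Set.mem_prod, coe_filter, Set.mem_ofPred_eq, Fintype.mem_piFinset,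
      coe_univ, Set.mem_univ, and_true] at hr ⊢
    exact ⟨fun i => by simpa using hr (σ.symm i), hμ⟩

theorem det_eq_zero_of_forall_le_le {n : Type*} [Fintype n] [LinearOrder n]
    [LocallyFiniteOrderBot n] (M : Matrix n n R) (k : n)
    (h : ∀ i j, j ≤ k → k ≤ i → M i j = 0) : M.det = 0 := by
  rw [det_apply]
  refine sum_eq_zero fun σ _ => ?_
  obtain ⟨j, hjk, hkσ⟩ : ∃ j ≤ k, k ≤ σ j := by
    by_contra! hσ
    have := card_le_card_of_injOn σ (fun j hj => mem_Iio.2 (hσ j (mem_Iic.1 hj)))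
      σ.injective.injOn
    rw [← Iio_insert, card_insert_of_notMem notMem_Iio_self] at this
    omega
  exact smul_eq_zero_of_right _ (prod_eq_zero (mem_univ j) (h _ _ hjk hkσ))

theorem det_of_antitone_eq_zero_of_lt {n α : Type*} [Fintype n] [LinearOrder n]
    [LocallyFiniteOrderBot n] [LinearOrder α] {T : α → α → R} (hT : ∀ a b, a < b → T a b = 0)
    {lam μ : n → α} (hlam : Antitone lam) (hμ : Antitone μ) {k : n} (hk : lam k < μ k) :
    det (of fun i j => T (lam i) (μ j)) = 0 :=
  det_eq_zero_of_forall_le_le _ k fun _ _ hjk hki =>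
    hT _ _ ((hlam hki).trans_lt (hk.trans_le (hμ hjk)))

end Matrix

theorem sum_strictAnti_eq_sum_antitone {M : Type*} [AddCommMonoid M] {N L : ℕ} (ν : Fin N → ℕ)
    (hL : ∀ i, ν i + (N - 1 - i) < L) (c : (Fin N → ℕ) → M)
    (hc : ∀ μ, StrictAnti μ → ∀ k, ν k + (N - 1 - k) < μ k → c μ = 0) :
    ∑ μ ∈ Fintype.piFinset (fun _ => range L) with StrictAnti μ, c μ =
      ∑ g ∈ (univ : Finset (∀ i, Fin (ν i + 1))) with Antitone fun i => (g i : ℕ),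
        c fun i => g i + (N - 1 - i) := by
  symm
  refine sum_of_injOn (fun g i => g i + (N - 1 - i)) ?_ ?_ ?_ fun _ _ => rfl
  · intro g _ g' _ h
    funext i
    have := congrFun h i
    exact Fin.ext (by simpa using this)
  · intro g hg
    simp only [coe_filter, mem_univ, true_and, Set.mem_ofPred_eq, Fintype.mem_piFinset,
      mem_range] at hg ⊢
    refine ⟨fun i => (hL i).trans_le' (by have := (g i).isLt; omega), fun i j hij => ?_⟩
    have := hg hij.le
    have : (i : ℕ) < j := hij
    dsimp only at *
    omega
  · intro μ hμ hμ_image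
    have hμ_anti := (mem_filter.1 hμ).2
    by_contra hcμ
    have hle : ∀ k, μ k ≤ ν k + (N - 1 - k) := fun k => not_lt.1 fun hk => hcμ (hc μ hμ_anti k hk)
    refine hμ_image ⟨fun i => ⟨μ i - (N - 1 - i), by have := hle i; omega⟩, ?_, ?_⟩
    · simp only [coe_filter, mem_univ, true_and, Set.mem_ofPred_eq]
      intro i j hij
      have := hμ_anti.antitone_add_val hij
      have := hμ_anti.sub_one_sub_le i
      have := hμ_anti.sub_one_sub_le j
      have : (i : ℕ) ≤ j := hij
      simp only at *
      omega
    · funext i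
      have := hμ_anti.sub_one_sub_le i
      simp only
      omega

namespace Polynomial

theorem eval_eq_sum_range_of_lt {R : Type*} [CommSemiring R] {φ φ' : ℕ → R[X]}
    {t : ℕ → ℕ → R} (hrel : ∀ n, φ n = ∑ m ∈ range (n + 1), C (t n m) * φ' m)
    (ht : ∀ n m, n < m → t n m = 0) {n L : ℕ} (hn : n < L) (y : R) :
    (φ n).eval y = ∑ m ∈ range L, t n m * (φ' m).eval y := by
  rw [hrel, eval_finsetSum]
  simp only [eval_mul, eval_C]
  refine sum_subset (range_subset_range.2 hn) fun m _ hm => ?_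
  rw [ht n m (by simpa using hm), zero_mul]

end Polynomial

theorem multivariate_expansion_general (N : ℕ) (t : ℕ → ℕ → ℝ) (φ φ' : ℕ → Polynomial ℝ)
    (hrel : ∀ n, φ n = ∑ m ∈ Finset.range (n + 1), Polynomial.C (t n m) * φ' m)
    (ht : ∀ n m, n < m → t n m = 0)
    (ν : Fin N → ℕ) (hν : Antitone ν) (x : Fin N → ℝ) :
    Matrix.det (Matrix.of fun i j : Fin N =>
        (φ (ν i + (N - 1 - (i : ℕ)))).eval (x j)) / vandermondeProd x =
      ∑ g ∈ (Finset.univ : Finset (∀ i : Fin N, Fin (ν i + 1))).filter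
          (fun g => Antitone fun i => (g i : ℕ)),
        Matrix.det (Matrix.of fun i j : Fin N =>
            t (ν i + (N - 1 - (i : ℕ))) ((g j : ℕ) + (N - 1 - (j : ℕ)))) *
          (Matrix.det (Matrix.of fun i j : Fin N =>
              (φ' ((g i : ℕ) + (N - 1 - (i : ℕ)))).eval (x j)) / vandermondeProd x) := by
  set lam : Fin N → ℕ := fun i => ν i + (N - 1 - i)
  have hlam : Antitone lam := fun i j hij => add_le_add (hν hij) (Nat.sub_le_sub_left hij _)
  obtain ⟨L, hL⟩ : ∃ L, ∀ i, lam i < L :=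
    ⟨univ.sup lam + 1, fun i => Nat.lt_succ_of_le (le_sup (mem_univ i))⟩
  have hrows : (Matrix.of fun i j => (φ (lam i)).eval (x j)) =
      Matrix.of fun i j => ∑ m ∈ range L, t (lam i) m * (φ' m).eval (x j) := by
    ext i j
    exact Polynomial.eval_eq_sum_range_of_lt hrel ht (hL i) _
  rw [hrows, Matrix.det_of_sum_mul_eq_sum_strictAnti, sum_div,
    sum_strictAnti_eq_sum_antitone ν hL]
  · exact sum_congr rfl fun _ _ => mul_div_assoc _ _ _
  · intro μ hμ k hk
    rw [Matrix.det_of_antitone_eq_zero_of_lt ht hlam hμ.antitone hk, zero_mul, zero_div]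

/-- Expansion of multivariate analogs: if `{φ_n}` and `{φ'_n}` are monic bases of
polynomials with `φ_n = ∑_{m ≤ n} t(n,m) φ'_m`, then for a partition `ν` with at
most `N` parts, `φ_{ν|N} = ∑_{μ ⊆ ν} t(ν,μ) φ'_{μ|N}`, where
`φ_{ν|N}(x) = det[φ_{ν_i+N-i}(x_j)]/V_N(x)` and
`t(ν,μ) = det[t(ν_i+N-i, μ_j+N-j)]`. -/
theorem multivariate_expansion (N : ℕ) (t : ℕ → ℕ → ℝ) (φ φ' : ℕ → Polynomial ℝ)
    (hmonic : ∀ n, (φ n).Monic) (hdeg : ∀ n, (φ n).natDegree = n)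
    (hmonic' : ∀ n, (φ' n).Monic) (hdeg' : ∀ n, (φ' n).natDegree = n)
    (hrel : ∀ n, φ n = ∑ m ∈ Finset.range (n + 1), Polynomial.C (t n m) * φ' m)
    (ht : ∀ n m, n < m → t n m = 0)
    (ν : Fin N → ℕ) (hν : Antitone ν) (x : Fin N → ℝ) :
    Matrix.det (Matrix.of fun i j : Fin N =>
        (φ (ν i + (N - 1 - (i : ℕ)))).eval (x j)) / vandermondeProd x =
      ∑ g ∈ (Finset.univ : Finset (∀ i : Fin N, Fin (ν i + 1))).filter
          (fun g => Antitone fun i => (g i : ℕ)),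
        Matrix.det (Matrix.of fun i j : Fin N =>
            t (ν i + (N - 1 - (i : ℕ))) ((g j : ℕ) + (N - 1 - (j : ℕ)))) *
          (Matrix.det (Matrix.of fun i j : Fin N =>
              (φ' ((g i : ℕ) + (N - 1 - (i : ℕ)))).eval (x j)) / vandermondeProd x) :=
  multivariate_expansion_general N t φ φ' hrel ht ν hν x
end

section
/- Define linear functionals on the ring of symmetric functions by φ^LA(S_ν) = (z)_ν (z')_ν · dim ν / |ν|!, where (z)_ν = Π_{□∈ν}(z + c(□)) and dim ν is the number of standard Young tableaux of shape ν. Then for the Laguerre symmetric function 𝔏_ν = Σ_{μ⊆ν} (-1)^{|ν|-|μ|} (dim ν/μ)/(|ν|-|μ|)! (z)_{ν/μ}(z')_{ν/μ} S_μ, one has φ^LA(𝔏_ν) = δ_{ν,∅}. -/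
open scoped Classical

/-- A finite set of boxes `(row, column)` (0-indexed) is a Young diagram if it is a
lower set in the coordinatewise order. -/
def IsYD (s : Finset (ℕ × ℕ)) : Prop :=
  ∀ p ∈ s, ∀ q : ℕ × ℕ, q.1 ≤ p.1 → q.2 ≤ p.2 → q ∈ s

/-- Young diagrams (= partitions). -/
def YD : Type := {s : Finset (ℕ × ℕ) // IsYD s}

/-- `skewDim n μ ν` counts the chains of diagrams from `ν` down to `μ` removing one
corner box at a time in `n` steps; for `n = |ν| - |μ|` this is the number `dim ν/μ`
of standard Young tableaux of skew shape `ν/μ`. -/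
noncomputable def skewDim : ℕ → Finset (ℕ × ℕ) → Finset (ℕ × ℕ) → ℕ
  | 0, μ, ν => if μ = ν then 1 else 0
  | n + 1, μ, ν =>
      ∑ p ∈ ν.filter (fun p => IsYD (ν.erase p) ∧ μ ⊆ ν.erase p),
        skewDim n μ (ν.erase p)

/-- `dim ν`, the number of standard Young tableaux of shape `ν`. -/
noncomputable def dimYD (s : Finset (ℕ × ℕ)) : ℕ := skewDim s.card ∅ s

/-- `(z)_s = ∏_{□ ∈ s} (z + c(□))` with `c(i,j) = j - i` the content. -/
noncomputable def contentPoch (z : ℂ) (s : Finset (ℕ × ℕ)) : ℂ :=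
  ∏ p ∈ s, (z + (p.2 : ℂ) - (p.1 : ℂ))

/-- The Laguerre symmetric function `𝔏_ν`, expanded in the Schur basis `S_μ`
(encoded as `Finsupp.single μ 1` in the free module `YD →₀ ℂ` with basis the
Schur functions). -/
noncomputable def LagSF (z z' : ℂ) (ν : YD) : YD →₀ ℂ :=
  ∑ s ∈ (ν.1.powerset.filter IsYD).attach,
    ((-1 : ℂ) ^ (ν.1.card - s.1.card) *
        (skewDim (ν.1.card - s.1.card) s.1 ν.1 : ℂ) /
          (Nat.factorial (ν.1.card - s.1.card) : ℂ) *
        contentPoch z (ν.1 \ s.1) * contentPoch z' (ν.1 \ s.1)) •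
      Finsupp.single (⟨s.1, (Finset.mem_filter.mp s.2).2⟩ : YD) (1 : ℂ)

/-- The formal moment functional `φ^LA`, i.e. the linear functional on symmetric
functions determined on the Schur basis by
`φ^LA(S_ν) = (z)_ν (z')_ν dim ν / |ν|!`. -/
noncomputable def phiLA (z z' : ℂ) (F : YD →₀ ℂ) : ℂ :=
  F.sum fun ν a =>
    a * (contentPoch z ν.1 * contentPoch z' ν.1 * (dimYD ν.1 : ℂ) /
      (Nat.factorial ν.1.card : ℂ))

/-! Since `(z)_ν = (z)_{ν/μ} (z)_μ`, the value `φ^LA(𝔏_ν)` is `(z)_ν (z')_ν` times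
`∑_{μ ⊆ ν} (-1)^{n-|μ|} dim(ν/μ) dim μ / ((n-|μ|)! |μ|!)`, where `n = |ν|`. Cutting a
standard tableau of shape `ν` after its first `k` entries gives
`∑_{|μ| = k} dim(ν/μ) dim μ = dim ν`, so the sum is
`dim ν ∑_k (-1)^{n-k} / ((n-k)! k!) = dim ν (1 - 1)^n / n!`, which vanishes unless `n = 0`. -/

open Finset
open scoped Nat

theorem skewDim_eq_zero_of_not_subset {n : ℕ} {μ ν : Finset (ℕ × ℕ)} (h : ¬μ ⊆ ν) :
    skewDim n μ ν = 0 := by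
  cases n with
  | zero => simp only [skewDim, ite_eq_right_iff]; rintro rfl; exact absurd subset_rfl h
  | succ n =>
    exact sum_eq_zero fun p hp => absurd ((mem_filter.mp hp).2.2.trans (erase_subset _ _)) h

theorem skewDim_succ_eq_sum (n : ℕ) (μ ν : Finset (ℕ × ℕ)) :
    skewDim (n + 1) μ ν = ∑ p ∈ ν.filter (fun p => IsYD (ν.erase p)), skewDim n μ (ν.erase p) := by
  rw [skewDim, ← filter_filter, sum_filter]
  exact sum_congr rfl fun p _ => ite_eq_left_iff.mpr fun h => (skewDim_eq_zero_of_not_subset h).symm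

theorem skewDim_add (a b : ℕ) (ρ ν : Finset (ℕ × ℕ)) :
    skewDim (a + b) ρ ν = ∑ μ ∈ ν.powerset, skewDim a μ ν * skewDim b ρ μ := by
  induction a generalizing ν with
  | zero => simp [skewDim]
  | succ a ih =>
    have extend (p : ℕ × ℕ) : ∑ μ ∈ (ν.erase p).powerset, skewDim a μ (ν.erase p) * skewDim b ρ μ =
        ∑ μ ∈ ν.powerset, skewDim a μ (ν.erase p) * skewDim b ρ μ :=
      sum_subset (powerset_mono.mpr (erase_subset _ _)) fun μ _ hμ => by
        rw [skewDim_eq_zero_of_not_subset (mt mem_powerset.mpr hμ), zero_mul]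
    simp_rw [Nat.add_right_comm a 1 b, skewDim_succ_eq_sum, ih, extend, sum_mul]
    exact sum_comm

theorem skewDim_eq_zero_of_card_ne {n : ℕ} {μ ν : Finset (ℕ × ℕ)} (h : ν.card ≠ μ.card + n) :
    skewDim n μ ν = 0 := by
  induction n generalizing ν with
  | zero => simp only [skewDim, ite_eq_right_iff]; rintro rfl; exact absurd rfl h
  | succ n ih =>
    rw [skewDim_succ_eq_sum]
    refine sum_eq_zero fun p hp => ih ?_
    have hcard := card_erase_add_one (mem_filter.mp hp).1
    omega

theorem skewDim_eq_zero_of_not_isYD {n : ℕ} {μ ν : Finset (ℕ × ℕ)} (hν : IsYD ν) (hμ : ¬IsYD μ) :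
    skewDim n μ ν = 0 := by
  induction n generalizing ν with
  | zero => simp only [skewDim, ite_eq_right_iff]; rintro rfl; exact absurd hν hμ
  | succ n ih => exact sum_eq_zero fun p hp => ih (mem_filter.mp hp).2.1

theorem sum_powersetCard_skewDim_mul_dimYD {k : ℕ} {ν : Finset (ℕ × ℕ)} (hk : k ≤ ν.card) :
    ∑ μ ∈ powersetCard k ν, skewDim (ν.card - k) μ ν * dimYD μ = dimYD ν := by
  calc ∑ μ ∈ powersetCard k ν, skewDim (ν.card - k) μ ν * dimYD μ
      = ∑ μ ∈ powersetCard k ν, skewDim (ν.card - k) μ ν * skewDim k ∅ μ :=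
        sum_congr rfl fun μ hμ => by rw [dimYD, (mem_powersetCard.mp hμ).2]
    _ = ∑ μ ∈ ν.powerset, skewDim (ν.card - k) μ ν * skewDim k ∅ μ := by
        refine sum_subset (fun μ hμ => mem_powerset.mpr (mem_powersetCard.mp hμ).1)
          fun μ hμν hμk => ?_
        have := card_le_card (mem_powerset.mp hμν)
        have : μ.card ≠ k := fun h => hμk (mem_powersetCard.mpr ⟨mem_powerset.mp hμν, h⟩)
        rw [skewDim_eq_zero_of_card_ne (by omega), zero_mul]
    _ = dimYD ν := by rw [← skewDim_add, Nat.sub_add_cancel hk, dimYD]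

theorem sum_range_neg_one_pow_div_factorial_mul_factorial {K : Type*} [Field K] [CharZero K]
    (n : ℕ) : ∑ k ∈ range (n + 1), (-1 : K) ^ (n - k) / ((n - k)! * k ! : K) = 0 ^ n := by
  have hterm : ∀ k ∈ range (n + 1),
      (-1 : K) ^ (n - k) / ((n - k)! * k ! : K) = 1 ^ k * (-1) ^ (n - k) * n.choose k / n ! :=
    fun k hk => by
      have : (n ! : K) ≠ 0 := Nat.cast_ne_zero.mpr n.factorial_ne_zero
      rw [one_pow, Nat.cast_choose K (Nat.lt_succ_iff.mp (mem_range.mp hk))]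
      field_simp
  rw [sum_congr rfl hterm, ← sum_div, ← add_pow, add_neg_cancel]
  rcases n with _ | n <;> simp

theorem sum_signed_skewDim_mul_dimYD {ν : Finset (ℕ × ℕ)} (hν : IsYD ν) :
    ∑ s ∈ ν.powerset.filter IsYD, (-1 : ℂ) ^ (ν.card - s.card) * skewDim (ν.card - s.card) s ν /
      (ν.card - s.card)! * (dimYD s / s.card !) = dimYD ν * 0 ^ ν.card := by
  rw [sum_filter_of_ne fun s _ hs => by_contra fun hsYD => hs (by
    rw [skewDim_eq_zero_of_not_isYD hν hsYD]; simp)]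
  set n := ν.card
  calc _ = ∑ k ∈ range (n + 1), (-1 : ℂ) ^ (n - k) / ((n - k)! * k !) *
        ((∑ s ∈ powersetCard k ν, skewDim (n - k) s ν * dimYD s : ℕ) : ℂ) := by
        rw [sum_powerset]
        refine sum_congr rfl fun k _ => ?_
        rw [Nat.cast_sum, mul_sum]
        refine sum_congr rfl fun s hs => ?_
        rw [(mem_powersetCard.mp hs).2]
        push_cast
        ring
    _ = ∑ k ∈ range (n + 1), (-1 : ℂ) ^ (n - k) / ((n - k)! * k !) * dimYD ν :=
        sum_congr rfl fun k hk => by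
          rw [sum_powersetCard_skewDim_mul_dimYD (Nat.lt_succ_iff.mp (mem_range.mp hk))]
    _ = dimYD ν * 0 ^ n := by
        rw [← sum_mul, sum_range_neg_one_pow_div_factorial_mul_factorial, mul_comm]

theorem phiLA_sum_smul_single {ι : Type*} (z z' : ℂ) (s : Finset ι) (c : ι → ℂ) (μ : ι → YD) :
    phiLA z z' (∑ i ∈ s, c i • Finsupp.single (μ i) 1) = ∑ i ∈ s, c i *
      (contentPoch z (μ i).1 * contentPoch z' (μ i).1 * dimYD (μ i).1 / (μ i).1.card !) := by
  rw [phiLA, ← Finsupp.sum_finsetSum_index (fun _ => zero_mul _) fun _ _ _ => add_mul _ _ _]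
  simp [Finsupp.sum_single_index]

theorem contentPoch_sdiff_mul (z : ℂ) {s ν : Finset (ℕ × ℕ)} (h : s ⊆ ν) :
    contentPoch z (ν \ s) * contentPoch z s = contentPoch z ν :=
  prod_sdiff h

/-- `φ^LA(𝔏_ν) = δ_{ν,∅}`. -/
theorem phiLA_LagSF (z z' : ℂ) (ν : YD) :
    phiLA z z' (LagSF z z' ν) = if ν.1 = ∅ then 1 else 0 := by
  refine (phiLA_sum_smul_single z z' _ _ _).trans ?_
  calc _ = contentPoch z ν.1 * contentPoch z' ν.1 * ∑ s ∈ ν.1.powerset.filter IsYD,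
        (-1 : ℂ) ^ (ν.1.card - s.card) * skewDim (ν.1.card - s.card) s ν.1 /
          (ν.1.card - s.card)! * (dimYD s / s.card !) := by
        rw [mul_sum]
        refine Eq.trans (sum_congr rfl fun s _ => ?_) (sum_attach _ _)
        have hsν := mem_powerset.mp (mem_filter.mp s.2).1
        rw [← contentPoch_sdiff_mul z hsν, ← contentPoch_sdiff_mul z' hsν]
        ring
    _ = contentPoch z ν.1 * contentPoch z' ν.1 * (dimYD ν.1 * 0 ^ ν.1.card) := by
        rw [sum_signed_skewDim_mul_dimYD ν.2]
    _ = if ν.1 = ∅ then 1 else 0 := by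
        split_ifs with h
        · simp [h, contentPoch, dimYD, skewDim]
        · simp [h]
end

section
/- Define the Laguerre operator 𝔇^LA on the ring of symmetric functions (with parameters z, z') by 𝔇^LA S_ν = -|ν| S_ν + Σ_{□∈ν⁻} (z + c(□))(z' + c(□)) S_{ν∖□}, where ν⁻ is the set of corner boxes of ν. Then each Laguerre symmetric function 𝔏_ν = Σ_{μ⊆ν} (-1)^{|ν|-|μ|} (dim ν/μ)/(|ν|-|μ|)! (z)_{ν/μ}(z')_{ν/μ} S_μ satisfies 𝔇^LA 𝔏_ν = -|ν| 𝔏_ν. -/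
open scoped Classical

/-- The Laguerre operator `𝔇^LA` on symmetric functions, defined on the Schur basis by
`𝔇^LA S_ν = -|ν| S_ν + ∑_{□ ∈ ν⁻} (z + c(□))(z' + c(□)) S_{ν∖□}`, where `ν⁻` is the
set of corner boxes of `ν`. -/
noncomputable def DLAop (z z' : ℂ) (F : YD →₀ ℂ) : YD →₀ ℂ :=
  F.sum fun ν a =>
    a • ((-(ν.1.card : ℂ)) • Finsupp.single ν (1 : ℂ) +
      ∑ p ∈ (ν.1.filter (fun p => IsYD (ν.1.erase p))).attach,
        ((z + (p.1.2 : ℂ) - (p.1.1 : ℂ)) * (z' + (p.1.2 : ℂ) - (p.1.1 : ℂ))) •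
          (Finsupp.single (⟨ν.1.erase p.1, (Finset.mem_filter.mp p.2).2⟩ : YD) (1 : ℂ) :
            YD →₀ ℂ))

noncomputable def indC {M : Type*} [Zero M] (P : Prop) (x : M) : M :=
  if P then x else 0

lemma indC_pos {M : Type*} [Zero M] {P : Prop} (h : P) (x : M) : indC P x = x := if_pos h

lemma indC_neg {M : Type*} [Zero M] {P : Prop} (h : ¬P) (x : M) : indC P x = 0 := if_neg h

lemma indC_zero {M : Type*} [Zero M] (P : Prop) : indC P (0 : M) = 0 := by
  by_cases h : P
  · exact indC_pos h 0
  · exact indC_neg h 0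

lemma indC_congr {M : Type*} [Zero M] {P Q : Prop} (h : P ↔ Q) (x : M) :
    indC P x = indC Q x := by
  by_cases hp : P
  · rw [indC_pos hp, indC_pos (h.mp hp)]
  · rw [indC_neg hp, indC_neg (fun hq => hp (h.mpr hq))]

lemma indC_indC {M : Type*} [Zero M] (P Q : Prop) (x : M) :
    indC P (indC Q x) = indC (P ∧ Q) x := by
  by_cases hp : P
  · rw [indC_pos hp]
    by_cases hq : Q
    · rw [indC_pos hq, indC_pos ⟨hp, hq⟩]
    · rw [indC_neg hq, indC_neg (fun h => hq h.2)]
  · rw [indC_neg hp, indC_neg (fun h => hp h.1)]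

lemma indC_sum {α M : Type*} [AddCommMonoid M] (P : Prop) (s : Finset α) (f : α → M) :
    ∑ x ∈ s, indC P (f x) = indC P (∑ x ∈ s, f x) := by
  by_cases hp : P
  · simp only [indC_pos hp]
  · simp only [indC_neg hp, Finset.sum_const_zero]

lemma ite_eq_indC {M : Type*} [Zero M] (P : Prop) [Decidable P] (x : M) :
    (if P then x else 0) = indC P x := by
  by_cases h : P
  · rw [if_pos h, indC_pos h]
  · rw [if_neg h, indC_neg h]

lemma sum_filter_indC {α M : Type*} [AddCommMonoid M] (s : Finset α) (c : α → Prop)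
    [DecidablePred c] (g : α → M) : ∑ x ∈ s.filter c, g x = ∑ x ∈ s, indC (c x) (g x) := by
  rw [Finset.sum_filter]
  exact Finset.sum_congr rfl fun x _ => ite_eq_indC _ _

lemma sum_superset_indC {α M : Type*} [AddCommMonoid M] {s t : Finset α} (hst : s ⊆ t)
    (g : α → M) : ∑ x ∈ s, g x = ∑ x ∈ t, indC (x ∈ s) (g x) := by
  rw [← sum_filter_indC]
  congr 1
  ext x
  simp only [Finset.mem_filter]
  exact ⟨fun h => ⟨hst h, h⟩, fun h => h.2⟩

lemma sum_indC_eq {α M : Type*} [AddCommMonoid M] (s : Finset α) (a : α) (f : α → M) :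
    ∑ x ∈ s, indC (x = a) (f x) = indC (a ∈ s) (f a) := by
  by_cases h : a ∈ s
  · rw [indC_pos h, ← sum_filter_indC,
      show s.filter (fun x => x = a) = {a} from by
        ext x
        simp only [Finset.mem_filter, Finset.mem_singleton]
        exact ⟨fun h' => h'.2, fun h' => ⟨h' ▸ h, h'⟩⟩,
      Finset.sum_singleton]
  · rw [indC_neg h, ← sum_filter_indC,
      show s.filter (fun x => x = a) = ∅ from by
        ext x
        simp only [Finset.mem_filter, Finset.notMem_empty, iff_false, not_and]
        rintro hx rfl
        exact h hx,
      Finset.sum_empty]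

lemma mul_indC_one {P : Prop} (x : ℂ) : x * indC P 1 = indC P x := by
  by_cases h : P
  · rw [indC_pos h, indC_pos h, mul_one]
  · rw [indC_neg h, indC_neg h, mul_zero]

lemma skewDim_succ (μ ν : Finset (ℕ × ℕ)) (k : ℕ) :
    skewDim (k + 1) μ ν =
      ∑ p ∈ ν.filter (fun p => IsYD (ν.erase p) ∧ μ ⊆ ν.erase p),
        skewDim k μ (ν.erase p) := rfl

lemma skewDim_bottom : ∀ (k : ℕ) (μ ν : Finset (ℕ × ℕ)), IsYD μ → IsYD ν → μ ⊆ ν →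
    skewDim (k + 1) μ ν =
      ∑ p ∈ (ν \ μ).filter (fun p => IsYD (insert p μ)), skewDim k (insert p μ) ν := by
  intro k
  induction k with
  | zero =>
    intro μ ν hμ hν hsub
    rw [skewDim_succ, sum_filter_indC, sum_filter_indC,
      sum_superset_indC (Finset.sdiff_subset : ν \ μ ⊆ ν)]
    simp only [indC_indC]
    refine Finset.sum_congr rfl fun p hp => ?_
    by_cases hpm : p ∈ μ
    · rw [indC_neg (fun h => (Finset.notMem_erase p ν) (h.2 hpm)),
        indC_neg (fun h => (Finset.mem_sdiff.mp h.1).2 hpm)]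
    · by_cases he : μ = ν.erase p
      · have hins : insert p μ = ν := by rw [he, Finset.insert_erase hp]
        rw [indC_pos ⟨(he ▸ hμ : IsYD (ν.erase p)), he.le⟩,
          indC_pos ⟨Finset.mem_sdiff.mpr ⟨hp, hpm⟩, (hins ▸ hν : IsYD (insert p μ))⟩]
        show (if μ = ν.erase p then 1 else 0) = (if insert p μ = ν then 1 else 0)
        rw [if_pos he, if_pos hins]
      · have hne : insert p μ ≠ ν := fun h => he (by rw [← h, Finset.erase_insert hpm])
        have e1 : skewDim 0 μ (ν.erase p) = 0 := if_neg he
        have e2 : skewDim 0 (insert p μ) ν = 0 := if_neg hne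
        rw [e1, e2, indC_zero, indC_zero]
  | succ k ih =>
    intro μ ν hμ hν hsub
    rw [skewDim_succ, sum_filter_indC]
    have L1 : ∀ q ∈ ν,
        indC (IsYD (ν.erase q) ∧ μ ⊆ ν.erase q) (skewDim (k + 1) μ (ν.erase q)) =
          ∑ p ∈ ν, indC ((IsYD (ν.erase q) ∧ μ ⊆ ν.erase q) ∧
              p ∈ (ν.erase q) \ μ ∧ IsYD (insert p μ))
            (skewDim k (insert p μ) (ν.erase q)) := by
      intro q hq
      by_cases hC : IsYD (ν.erase q) ∧ μ ⊆ ν.erase q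
      · rw [indC_pos hC, ih μ (ν.erase q) hμ hC.1 hC.2, sum_filter_indC,
          sum_superset_indC ((Finset.sdiff_subset).trans (Finset.erase_subset q ν))]
        simp only [indC_indC]
        exact Finset.sum_congr rfl fun p hp => indC_congr (by tauto) _
      · rw [indC_neg hC, eq_comm]
        exact Finset.sum_eq_zero fun p hp => indC_neg (fun hcond => hC hcond.1) _
    rw [Finset.sum_congr rfl L1, Finset.sum_comm]
    rw [sum_filter_indC, sum_superset_indC (Finset.sdiff_subset : ν \ μ ⊆ ν)]
    simp only [indC_indC]
    refine Finset.sum_congr rfl fun p hp => ?_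
    by_cases hC : p ∈ ν \ μ ∧ IsYD (insert p μ)
    · rw [indC_pos hC, skewDim_succ, sum_filter_indC]
      refine Finset.sum_congr rfl fun q hq => indC_congr ?_ _
      simp only [Finset.mem_sdiff, Finset.mem_erase, Finset.insert_subset_iff] at hC ⊢
      constructor
      · rintro ⟨⟨hyd, hsub'⟩, ⟨⟨hpq, hpν⟩, hpm⟩, hins⟩
        exact ⟨hyd, ⟨hpq, hpν⟩, hsub'⟩
      · rintro ⟨hyd, ⟨hpq, hpν⟩, hsub'⟩
        exact ⟨⟨hyd, hsub'⟩, ⟨⟨hpq, hpν⟩, hC.1.2⟩, hC.2⟩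
    · rw [indC_neg hC]
      refine Finset.sum_eq_zero fun q hq => indC_neg (fun hcond => hC ?_) _
      exact ⟨Finset.mem_sdiff.mpr ⟨Finset.erase_subset q ν (Finset.mem_sdiff.mp hcond.2.1).1,
        (Finset.mem_sdiff.mp hcond.2.1).2⟩, hcond.2.2⟩

noncomputable def cfC (z z' : ℂ) (ν t : Finset (ℕ × ℕ)) : ℂ :=
  (-1 : ℂ) ^ (ν.card - t.card) * (skewDim (ν.card - t.card) t ν : ℂ) /
      (Nat.factorial (ν.card - t.card) : ℂ) *
    contentPoch z (ν \ t) * contentPoch z' (ν \ t)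

lemma key_scalar (z z' : ℂ) (ν l : Finset (ℕ × ℕ)) (hν : IsYD ν) (hl : IsYD l)
    (hsub : l ⊆ ν) :
    -(l.card : ℂ) * cfC z z' ν l +
        ∑ p ∈ (ν \ l).filter (fun p => IsYD (insert p l)),
          ((z + (p.2 : ℂ) - (p.1 : ℂ)) * (z' + (p.2 : ℂ) - (p.1 : ℂ))) *
            cfC z z' ν (insert p l)
      = -(ν.card : ℂ) * cfC z z' ν l := by
  have hcard : l.card ≤ ν.card := Finset.card_le_card hsub
  cases hkk : ν.card - l.card with
  | zero =>
    have hle : l = ν := Finset.eq_of_subset_of_card_le hsub (by omega)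
    subst hle
    rw [Finset.sdiff_self, Finset.filter_empty, Finset.sum_empty, add_zero]
  | succ m =>
    have hn : ν.card = l.card + (m + 1) := by omega
    have hterm : ∀ p ∈ (ν \ l).filter (fun p => IsYD (insert p l)),
        ((z + (p.2 : ℂ) - (p.1 : ℂ)) * (z' + (p.2 : ℂ) - (p.1 : ℂ))) *
            cfC z z' ν (insert p l)
          = (skewDim m (insert p l) ν : ℂ) *
              ((-1 : ℂ) ^ m / (Nat.factorial m : ℂ) *
                contentPoch z (ν \ l) * contentPoch z' (ν \ l)) := by
      intro p hp
      rw [Finset.mem_filter, Finset.mem_sdiff] at hp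
      obtain ⟨⟨hpν, hpl⟩, hins⟩ := hp
      have hc1 : (insert p l).card = l.card + 1 := Finset.card_insert_of_notMem hpl
      have hc2 : ν.card - (insert p l).card = m := by omega
      have hd : ν \ insert p l = (ν \ l).erase p := Finset.sdiff_insert ν l p
      have hmem : p ∈ ν \ l := Finset.mem_sdiff.mpr ⟨hpν, hpl⟩
      unfold cfC contentPoch
      rw [hc2, hd, ← Finset.mul_prod_erase (ν \ l)
          (fun p => (z + (p.2 : ℂ) - (p.1 : ℂ))) hmem,
        ← Finset.mul_prod_erase (ν \ l)
          (fun p => (z' + (p.2 : ℂ) - (p.1 : ℂ))) hmem]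
      ring
    rw [Finset.sum_congr rfl hterm, ← Finset.sum_mul, ← Nat.cast_sum,
      ← skewDim_bottom m l ν hl hν hsub]
    unfold cfC
    rw [hkk]
    have hνc : (ν.card : ℂ) = (l.card : ℂ) + (m + 1 : ℕ) := by
      rw [hn]; push_cast; ring
    rw [hνc]
    have hfac : (Nat.factorial m : ℂ) ≠ 0 := Nat.cast_ne_zero.mpr (Nat.factorial_ne_zero m)
    have hfac2 : (Nat.factorial (m + 1) : ℂ) = ((m : ℂ) + 1) * (Nat.factorial m : ℂ) := by
      rw [Nat.factorial_succ]; push_cast; ring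
    rw [hfac2, pow_succ]
    have h3 : ((m : ℂ) + 1) * (Nat.factorial m : ℂ) ≠ 0 :=
      mul_ne_zero (Nat.cast_add_one_ne_zero m) hfac
    push_cast
    field_simp

lemma coeff_lemma (z z' : ℂ) (ν l : Finset (ℕ × ℕ)) (hν : IsYD ν) (hl : IsYD l) :
    (∑ s ∈ ν.powerset.filter IsYD, indC (s = l) (-(s.card : ℂ) * cfC z z' ν s)) +
      (∑ s ∈ ν.powerset.filter IsYD, ∑ p ∈ s.filter (fun p => IsYD (s.erase p)),
        indC (s.erase p = l)
          (((z + (p.2 : ℂ) - (p.1 : ℂ)) * (z' + (p.2 : ℂ) - (p.1 : ℂ))) * cfC z z' ν s))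
    = -(ν.card : ℂ) * ∑ s ∈ ν.powerset.filter IsYD, indC (s = l) (cfC z z' ν s) := by
  rw [sum_indC_eq, sum_indC_eq]
  by_cases hsub : l ⊆ ν
  · have hmem : l ∈ ν.powerset.filter IsYD :=
      Finset.mem_filter.mpr ⟨Finset.mem_powerset.mpr hsub, hl⟩
    rw [indC_pos hmem, indC_pos hmem]
    have hS : (∑ s ∈ ν.powerset.filter IsYD, ∑ p ∈ s.filter (fun p => IsYD (s.erase p)),
        indC (s.erase p = l)
          (((z + (p.2 : ℂ) - (p.1 : ℂ)) * (z' + (p.2 : ℂ) - (p.1 : ℂ))) * cfC z z' ν s))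
        = ∑ p ∈ (ν \ l).filter (fun p => IsYD (insert p l)),
            ((z + (p.2 : ℂ) - (p.1 : ℂ)) * (z' + (p.2 : ℂ) - (p.1 : ℂ))) *
              cfC z z' ν (insert p l) := by
      rw [sum_superset_indC (Finset.filter_subset IsYD ν.powerset)]
      have T1 : ∀ s ∈ ν.powerset,
          indC (s ∈ ν.powerset.filter IsYD)
            (∑ p ∈ s.filter (fun p => IsYD (s.erase p)),
              indC (s.erase p = l)
                (((z + (p.2 : ℂ) - (p.1 : ℂ)) * (z' + (p.2 : ℂ) - (p.1 : ℂ))) * cfC z z' ν s))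
          = ∑ p ∈ ν, indC (IsYD s ∧ p ∈ s ∧ IsYD (s.erase p) ∧ s.erase p = l)
              (((z + (p.2 : ℂ) - (p.1 : ℂ)) * (z' + (p.2 : ℂ) - (p.1 : ℂ))) * cfC z z' ν s) := by
        intro s hs
        have hsν : s ⊆ ν := Finset.mem_powerset.mp hs
        by_cases hys : IsYD s
        · rw [indC_pos (Finset.mem_filter.mpr ⟨hs, hys⟩), sum_filter_indC,
            sum_superset_indC hsν]
          simp only [indC_indC]
          exact Finset.sum_congr rfl fun p hp => indC_congr (by tauto) _
        · rw [indC_neg (fun h => hys (Finset.mem_filter.mp h).2), eq_comm]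
          exact Finset.sum_eq_zero fun p hp => indC_neg (fun h => hys h.1) _
      rw [Finset.sum_congr rfl T1, Finset.sum_comm]
      have T2 : ∀ p ∈ ν,
          (∑ s ∈ ν.powerset, indC (IsYD s ∧ p ∈ s ∧ IsYD (s.erase p) ∧ s.erase p = l)
            (((z + (p.2 : ℂ) - (p.1 : ℂ)) * (z' + (p.2 : ℂ) - (p.1 : ℂ))) * cfC z z' ν s))
          = indC (p ∉ l ∧ IsYD (insert p l))
              (((z + (p.2 : ℂ) - (p.1 : ℂ)) * (z' + (p.2 : ℂ) - (p.1 : ℂ))) *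
                cfC z z' ν (insert p l)) := by
        intro p hp
        have step : ∀ s ∈ ν.powerset,
            indC (IsYD s ∧ p ∈ s ∧ IsYD (s.erase p) ∧ s.erase p = l)
              (((z + (p.2 : ℂ) - (p.1 : ℂ)) * (z' + (p.2 : ℂ) - (p.1 : ℂ))) * cfC z z' ν s)
            = indC (s = insert p l)
                (indC (p ∉ l ∧ IsYD (insert p l))
                  (((z + (p.2 : ℂ) - (p.1 : ℂ)) * (z' + (p.2 : ℂ) - (p.1 : ℂ))) *
                    cfC z z' ν s)) := by
          intro s hs
          rw [indC_indC]
          refine indC_congr ?_ _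
          constructor
          · rintro ⟨hys, hps, hyse, hel⟩
            have hseq : s = insert p l := by
              rw [← hel, Finset.insert_erase hps]
            have hpl : p ∉ l := hel ▸ Finset.notMem_erase p s
            exact ⟨hseq, hpl, hseq ▸ hys⟩
          · rintro ⟨hseq, hpl, hyins⟩
            subst hseq
            exact ⟨hyins, Finset.mem_insert_self p l,
              (Finset.erase_insert hpl).symm ▸ hl, Finset.erase_insert hpl⟩
        rw [Finset.sum_congr rfl step]
        have : ∀ s ∈ ν.powerset, indC (s = insert p l)
                (indC (p ∉ l ∧ IsYD (insert p l))
                  (((z + (p.2 : ℂ) - (p.1 : ℂ)) * (z' + (p.2 : ℂ) - (p.1 : ℂ))) *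
                    cfC z z' ν s)) = indC (s = insert p l)
                (indC (p ∉ l ∧ IsYD (insert p l))
                  (((z + (p.2 : ℂ) - (p.1 : ℂ)) * (z' + (p.2 : ℂ) - (p.1 : ℂ))) *
                    cfC z z' ν (insert p l))) := by
          intro s hs
          by_cases hseq : s = insert p l
          · subst hseq; rfl
          · rw [indC_neg hseq, indC_neg hseq]
        rw [Finset.sum_congr rfl this, sum_indC_eq,
          indC_pos (Finset.mem_powerset.mpr (Finset.insert_subset hp hsub))]
      rw [Finset.sum_congr rfl T2, sum_filter_indC,
        sum_superset_indC (Finset.sdiff_subset : ν \ l ⊆ ν)]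
      simp only [indC_indC]
      refine Finset.sum_congr rfl fun p hp => indC_congr ?_ _
      simp only [Finset.mem_sdiff]
      tauto
    rw [hS]
    exact key_scalar z z' ν l hν hl hsub
  · have hmemno : l ∉ ν.powerset.filter IsYD :=
      fun h => hsub (Finset.mem_powerset.mp (Finset.mem_filter.mp h).1)
    rw [indC_neg hmemno, indC_neg hmemno, mul_zero, zero_add]
    refine Finset.sum_eq_zero fun s hs => Finset.sum_eq_zero fun p hp => indC_neg ?_ _
    intro hel
    exact hsub (hel ▸ ((Finset.erase_subset p s).trans
      (Finset.mem_powerset.mp (Finset.mem_filter.mp hs).1)))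

lemma coeff_lemma' (z z' : ℂ) (ν l : Finset (ℕ × ℕ)) (hν : IsYD ν) (hl : IsYD l) :
    ∑ x ∈ ν.powerset.filter IsYD, indC (x = l) (cfC z z' ν x * (-(x.card : ℂ) * 1)) +
      ∑ s ∈ ν.powerset.filter IsYD,
        ∑ x ∈ s.filter (fun p => IsYD (s.erase p)),
          indC (s.erase x = l)
            (cfC z z' ν s * ((z + (x.2 : ℂ) - (x.1 : ℂ)) * (z' + (x.2 : ℂ) - (x.1 : ℂ)) * 1))
    = ∑ x ∈ ν.powerset.filter IsYD, indC (x = l) (-(ν.card : ℂ) * (cfC z z' ν x * 1)) := by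
  have e1 : ∀ x ∈ ν.powerset.filter IsYD,
      indC (x = l) (cfC z z' ν x * (-(x.card : ℂ) * 1))
        = indC (x = l) (-(x.card : ℂ) * cfC z z' ν x) :=
    fun x _ => congrArg _ (by ring)
  have e2 : ∀ s ∈ ν.powerset.filter IsYD,
      (∑ x ∈ s.filter (fun p => IsYD (s.erase p)),
        indC (s.erase x = l)
          (cfC z z' ν s * ((z + (x.2 : ℂ) - (x.1 : ℂ)) * (z' + (x.2 : ℂ) - (x.1 : ℂ)) * 1)))
      = ∑ x ∈ s.filter (fun p => IsYD (s.erase p)),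
          indC (s.erase x = l)
            (((z + (x.2 : ℂ) - (x.1 : ℂ)) * (z' + (x.2 : ℂ) - (x.1 : ℂ))) * cfC z z' ν s) :=
    fun s _ => Finset.sum_congr rfl fun x _ => congrArg _ (by ring)
  have e3 : ∀ x ∈ ν.powerset.filter IsYD,
      indC (x = l) (-(ν.card : ℂ) * (cfC z z' ν x * 1))
        = -(ν.card : ℂ) * indC (x = l) (cfC z z' ν x) := by
    intro x _
    by_cases h : x = l
    · rw [indC_pos h, indC_pos h]; ring
    · rw [indC_neg h, indC_neg h, mul_zero]
  rw [Finset.sum_congr rfl e1, Finset.sum_congr rfl e2, Finset.sum_congr rfl e3,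
    ← Finset.mul_sum]
  exact coeff_lemma z z' ν l hν hl

noncomputable def TT (z z' : ℂ) (μ : YD) : YD →₀ ℂ :=
  (-(μ.1.card : ℂ)) • Finsupp.single μ (1 : ℂ) +
    ∑ p ∈ (μ.1.filter (fun p => IsYD (μ.1.erase p))).attach,
      ((z + (p.1.2 : ℂ) - (p.1.1 : ℂ)) * (z' + (p.1.2 : ℂ) - (p.1.1 : ℂ))) •
        (Finsupp.single (⟨μ.1.erase p.1, (Finset.mem_filter.mp p.2).2⟩ : YD) (1 : ℂ) :
          YD →₀ ℂ)

lemma DLAop_eq (z z' : ℂ) (F : YD →₀ ℂ) :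
    DLAop z z' F = Finsupp.linearCombination ℂ (TT z z') F := by
  rw [Finsupp.linearCombination_apply]
  rfl

lemma YD_mk_eq {a b : Finset (ℕ × ℕ)} (ha : IsYD a) (hb : IsYD b) :
    ((⟨a, ha⟩ : YD) = ⟨b, hb⟩) ↔ a = b := Subtype.ext_iff

lemma indC_YD_eq {a b : Finset (ℕ × ℕ)} (ha : IsYD a) (hb : IsYD b) (x : ℂ) :
    indC ((⟨a, ha⟩ : YD) = ⟨b, hb⟩) x = indC (a = b) x :=
  indC_congr (YD_mk_eq ha hb) x

lemma single_YD_apply {a b : Finset (ℕ × ℕ)} (ha : IsYD a) (hb : IsYD b) :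
    (Finsupp.single (⟨a, ha⟩ : YD) (1 : ℂ)) ⟨b, hb⟩ = indC (a = b) 1 := by
  rw [Finsupp.single_apply, ite_eq_indC]
  exact indC_YD_eq ha hb 1

def mkYD (s : Finset (ℕ × ℕ)) (h : IsYD s) : YD := ⟨s, h⟩

lemma mkYD_val (s : Finset (ℕ × ℕ)) (h : IsYD s) : (mkYD s h).1 = s := rfl

lemma TT_eq' (z z' : ℂ) (μ : YD) : TT z z' μ =
    (-(μ.1.card : ℂ)) • Finsupp.single μ (1 : ℂ) +
      ∑ p ∈ (μ.1.filter (fun p => IsYD (μ.1.erase p))).attach,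
        ((z + (p.1.2 : ℂ) - (p.1.1 : ℂ)) * (z' + (p.1.2 : ℂ) - (p.1.1 : ℂ))) •
          (Finsupp.single (mkYD (μ.1.erase p.1) (Finset.mem_filter.mp p.2).2) (1 : ℂ) :
            YD →₀ ℂ) := rfl

lemma LagSF_eq' (z z' : ℂ) (ν : YD) : LagSF z z' ν =
    ∑ s ∈ (ν.1.powerset.filter IsYD).attach,
      ((-1 : ℂ) ^ (ν.1.card - s.1.card) *
          (skewDim (ν.1.card - s.1.card) s.1 ν.1 : ℂ) /
            (Nat.factorial (ν.1.card - s.1.card) : ℂ) *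
          contentPoch z (ν.1 \ s.1) * contentPoch z' (ν.1 \ s.1)) •
        (Finsupp.single (mkYD s.1 (Finset.mem_filter.mp s.2).2) (1 : ℂ) : YD →₀ ℂ) := rfl

/-- The Laguerre symmetric functions are eigenvectors of the Laguerre operator:
`𝔇^LA 𝔏_ν = -|ν| 𝔏_ν`. -/
theorem DLAop_LagSF (z z' : ℂ) (ν : YD) :
    DLAop z z' (LagSF z z' ν) = (-(ν.1.card : ℂ)) • LagSF z z' ν := by
  rw [DLAop_eq]
  rw [LagSF_eq']
  rw [map_sum]
  simp only [map_smul, Finsupp.linearCombination_single, one_smul]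
  ext lam
  obtain ⟨l, hl, rfl⟩ : ∃ l hl, lam = mkYD l hl := ⟨lam.1, lam.2, rfl⟩
  simp only [TT_eq', mkYD_val, Finsupp.finset_sum_apply, Finsupp.smul_apply, Finsupp.coe_add, Pi.add_apply,
    Finsupp.single_apply, smul_eq_mul, ite_eq_indC]
  have hx : ∀ (a b : Finset (ℕ × ℕ)) (ha : IsYD a) (hb : IsYD b) (x : ℂ),
      indC (mkYD a ha = mkYD b hb) x = indC (a = b) x :=
    fun a b ha hb x => indC_congr (YD_mk_eq ha hb) x
  simp only [hx]
  have mul_indC : ∀ (P : Prop) (a b : ℂ), a * indC P b = indC P (a * b) := by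
    intro P a b
    by_cases h : P
    · rw [indC_pos h, indC_pos h]
    · rw [indC_neg h, indC_neg h, mul_zero]
  have hcf : ∀ t : Finset (ℕ × ℕ), (-1 : ℂ) ^ ((ν.1).card - t.card) *
        (skewDim ((ν.1).card - t.card) t ν.1 : ℂ) /
          (Nat.factorial ((ν.1).card - t.card) : ℂ) *
        contentPoch z (ν.1 \ t) * contentPoch z' (ν.1 \ t) = cfC z z' ν.1 t :=
    fun t => rfl
  simp only [mul_indC, mul_add, Finset.mul_sum, hcf]
  rw [Finset.sum_add_distrib]
  rw [Finset.sum_attach ((ν.1.powerset.filter IsYD))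
    (fun t => indC (t = l) (cfC z z' ν.1 t * (-(t.card : ℂ) * 1)))]
  rw [Finset.sum_attach ((ν.1.powerset.filter IsYD))
    (fun t => indC (t = l) (-(ν.1.card : ℂ) * (cfC z z' ν.1 t * 1)))]
  erw [Finset.sum_attach ((ν.1.powerset.filter IsYD))
    (fun t => ∑ p ∈ (t.filter (fun p => IsYD (t.erase p))).attach,
      indC (t.erase p.1 = l)
        (cfC z z' ν.1 t * ((z + (p.1.2 : ℂ) - (p.1.1 : ℂ)) * (z' + (p.1.2 : ℂ) - (p.1.1 : ℂ)) * 1)))]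
  rw [Finset.sum_congr rfl (fun s (hs : s ∈ ν.1.powerset.filter IsYD) =>
    Finset.sum_attach (s.filter (fun p => IsYD (s.erase p)))
      (fun p => indC (s.erase p = l)
        (cfC z z' ν.1 s * ((z + (p.2 : ℂ) - (p.1 : ℂ)) * (z' + (p.2 : ℂ) - (p.1 : ℂ)) * 1))))]
  exact coeff_lemma' z z' ν.1 l ν.2 hl
end

section
/- For every n ≥ 0 and complex z, z': Σ_{λ ⊢ n} (z)_λ (z')_λ (dim λ)^2 / (n!)^2 = (zz')_n / n!, where (z)_λ = Π_{(i,j)∈λ}(z+j-i), dim λ is the number of standard Young tableaux of shape λ, and (zz')_n is the Pochhammer symbol of the product zz'. -/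
open scoped Classical

/-!
Write `W c = (z + c) (z' + c)`, so that adding a box `□` of content `c(□)` to `λ` multiplies
`(z)_λ (z')_λ` by `W (c(□))`. Expanding one factor `dim λ` by the branching rule
`dim λ = ∑_{μ ↗ λ} dim μ` turns the sum over `|λ| = n + 1` into a sum over diagrams `μ` with
`|μ| = n` and their addable boxes, so the normalisation follows by induction from
`∑_{□ addable to μ} W (c(□)) dim (μ + □) = (n + 1) (z z' + n) dim μ`.
This is again proved by induction on `n`: expanding `dim (μ + □)` by the branching rule and
exchanging the addition of `□` with the removal of another corner reduces it to
`∑_{addable} W (c) - ∑_{removable} W (c) = z z' + 2 n`. That is a discrete Green formula: the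
left side is `W 0` plus the sum over the boxes of `μ` of the second difference of `W`, which
is the constant `2`.
-/

open Finset

namespace IsYD

variable {s : Finset (ℕ × ℕ)} {p : ℕ × ℕ}

lemma fst_lt_card (hs : IsYD s) (hp : p ∈ s) : p.1 < s.card := by
  have hcol : (range (p.1 + 1)).image (fun i => (i, p.2)) ⊆ s := by
    intro q hq
    obtain ⟨i, hi, rfl⟩ := mem_image.1 hq
    exact hs p hp _ (Nat.lt_succ_iff.1 (mem_range.1 hi)) le_rfl
  have := card_le_card hcol
  rw [card_image_of_injective _ fun i j h => (Prod.mk.inj h).1, card_range] at this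
  omega

lemma snd_lt_card (hs : IsYD s) (hp : p ∈ s) : p.2 < s.card := by
  have hrow : (range (p.2 + 1)).image (fun j => (p.1, j)) ⊆ s := by
    intro q hq
    obtain ⟨j, hj, rfl⟩ := mem_image.1 hq
    exact hs p hp _ le_rfl (Nat.lt_succ_iff.1 (mem_range.1 hj))
  have := card_le_card hrow
  rw [card_image_of_injective _ fun i j h => (Prod.mk.inj h).2, card_range] at this
  omega

lemma subset_range_prod_range (hs : IsYD s) : s ⊆ range s.card ×ˢ range s.card :=
  fun _ hp => mem_product.2 ⟨mem_range.2 (hs.fst_lt_card hp), mem_range.2 (hs.snd_lt_card hp)⟩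

lemma isYD_insert_iff (hs : IsYD s) :
    IsYD (insert p s) ↔ (p.1 = 0 ∨ (p.1 - 1, p.2) ∈ s) ∧ (p.2 = 0 ∨ (p.1, p.2 - 1) ∈ s) := by
  constructor
  · intro h
    have below : ∀ q : ℕ × ℕ, q.1 ≤ p.1 → q.2 ≤ p.2 → q ≠ p → q ∈ s := fun q h1 h2 hne =>
      (mem_insert.1 (h p (mem_insert_self p s) q h1 h2)).resolve_left hne
    refine ⟨or_iff_not_imp_left.2 fun h0 => below _ (by simp) le_rfl ?_,
      or_iff_not_imp_left.2 fun h0 => below _ le_rfl (by simp) ?_⟩ <;>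
      simp [Prod.ext_iff] <;> omega
  · rintro ⟨h1, h2⟩ q hq r hr1 hr2
    rcases mem_insert.1 hq with rfl | hq
    · by_cases hr : r = q
      · exact hr ▸ mem_insert_self r s
      refine mem_insert_of_mem ?_
      by_cases hlt : r.1 < q.1
      · exact hs _ (h1.resolve_left (by omega)) r (by omega) hr2
      · exact hs _ (h2.resolve_left fun h => hr (Prod.ext (by omega) (by omega))) r hr1
          (by by_contra; exact hr (Prod.ext (by omega) (by omega)))
    · exact mem_insert_of_mem (hs q hq r hr1 hr2)

lemma isYD_erase_iff (hs : IsYD s) :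
    IsYD (s.erase p) ↔ (p.1 + 1, p.2) ∉ s ∧ (p.1, p.2 + 1) ∉ s := by
  constructor
  · intro h
    constructor <;> intro hq <;>
      exact notMem_erase p s (h _ (mem_erase.2 ⟨by simp [Prod.ext_iff], hq⟩) p (by simp) (by simp))
  · rintro ⟨h1, h2⟩ q hq r hr1 hr2
    obtain ⟨hqp, hqs⟩ := mem_erase.1 hq
    refine mem_erase.2 ⟨?_, hs q hqs r hr1 hr2⟩
    rintro rfl
    by_cases hlt : r.1 < q.1
    · exact h1 (hs q hqs _ hlt hr2)
    · exact h2 (hs q hqs _ hr1 (by by_contra; exact hqp (Prod.ext (by omega) (by omega))))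

end IsYD

noncomputable def addable (s : Finset (ℕ × ℕ)) : Finset (ℕ × ℕ) :=
  (range (s.card + 1) ×ˢ range (s.card + 1)).filter fun p => p ∉ s ∧ IsYD (insert p s)

noncomputable def removable (s : Finset (ℕ × ℕ)) : Finset (ℕ × ℕ) :=
  s.filter fun p => IsYD (s.erase p)

lemma mem_addable {s : Finset (ℕ × ℕ)} {p : ℕ × ℕ} :
    p ∈ addable s ↔ p ∉ s ∧ IsYD (insert p s) := by
  refine mem_filter.trans ⟨And.right, fun h => ⟨?_, h⟩⟩
  have hcard : (insert p s).card = s.card + 1 := card_insert_of_notMem h.1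
  exact hcard ▸ h.2.subset_range_prod_range (mem_insert_self p s)

lemma mem_removable {s : Finset (ℕ × ℕ)} {p : ℕ × ℕ} :
    p ∈ removable s ↔ p ∈ s ∧ IsYD (s.erase p) :=
  mem_filter

lemma dimYD_eq_sum_removable {s : Finset (ℕ × ℕ)} (hs : s.Nonempty) :
    dimYD s = ∑ p ∈ removable s, dimYD (s.erase p) := by
  obtain ⟨n, hn⟩ : ∃ n, s.card = n + 1 := Nat.exists_eq_succ_of_ne_zero (card_ne_zero.2 hs)
  have herase : ∀ p ∈ removable s, (s.erase p).card = n := fun p hp => by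
    rw [card_erase_of_mem (mem_removable.1 hp).1, hn, Nat.add_sub_cancel]
  rw [sum_congr rfl fun p hp => by rw [dimYD, herase p hp]]
  simp only [dimYD, hn, skewDim, empty_subset, and_true, removable]

/-- Two distinct corners `b ∉ μ` and `b' ∈ μ` can be toggled in either order. -/
lemma mem_addable_and_mem_removable_insert_iff {μ : Finset (ℕ × ℕ)} (hμ : IsYD μ)
    (b b' : ℕ × ℕ) :
    b ∈ addable μ ∧ b' ∈ (removable (insert b μ)).erase b ↔
      b ∈ (addable (μ.erase b')).erase b' ∧ b' ∈ removable μ := by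
  simp only [mem_erase, mem_addable, mem_removable, mem_insert]
  constructor
  · rintro ⟨⟨hb, -⟩, hne, hb' | hb', hyd⟩
    · exact absurd hb' hne
    rw [erase_insert_of_ne (Ne.symm hne)] at hyd
    refine ⟨⟨Ne.symm hne, fun h => hb h.2, hyd⟩, hb', fun q hq r hr1 hr2 => ?_⟩
    have hrμ : r ∈ μ := hμ q (mem_of_mem_erase hq) r hr1 hr2
    exact mem_of_mem_insert_of_ne (hyd q (mem_insert_of_mem hq) r hr1 hr2)
      (ne_of_mem_of_not_mem hrμ hb)
  · rintro ⟨⟨hne, hb, hyd⟩, hb', -⟩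
    have hbμ : b ∉ μ := fun h => hb ⟨hne, h⟩
    refine ⟨⟨hbμ, fun q hq r hr1 hr2 => ?_⟩, Ne.symm hne, Or.inr hb', ?_⟩
    · rcases mem_insert.1 hq with rfl | hq
      · exact insert_subset_insert q (erase_subset b' μ) (hyd q (mem_insert_self q _) r hr1 hr2)
      · exact mem_insert_of_mem (hμ q hq r hr1 hr2)
    · rwa [erase_insert_of_ne hne]

lemma dimYD_insert {μ : Finset (ℕ × ℕ)} (hμ : IsYD μ) {b : ℕ × ℕ} (hb : b ∈ addable μ) :
    dimYD (insert b μ) = dimYD μ +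
      ∑ b' ∈ (removable (insert b μ)).erase b, dimYD (insert b (μ.erase b')) := by
  have hbμ : b ∉ μ := (mem_addable.1 hb).1
  have hb_rem : b ∈ removable (insert b μ) :=
    mem_removable.2 ⟨mem_insert_self b μ, by rwa [erase_insert hbμ]⟩
  rw [dimYD_eq_sum_removable (insert_nonempty b μ), ← add_sum_erase _ _ hb_rem, erase_insert hbμ]
  refine congrArg _ (sum_congr rfl fun b' hb' => ?_)
  rw [erase_insert_of_ne (ne_of_mem_erase hb').symm]

/-- Each box `p` is counted equally often on both sides; this is a local check on the `2 × 2`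
block with top-left corner `p - (1, 1)`. -/
lemma addable_val_add_image_add_val {s : Finset (ℕ × ℕ)} (hs : IsYD s) :
    (addable s).val + (s.image fun q => (q.1 + 1, q.2 + 1)).val + s.val =
      {(0, 0)} + ((removable s).image fun q => (q.1 + 1, q.2 + 1)).val +
        (s.image fun q => (q.1 + 1, q.2)).val + (s.image fun q => (q.1, q.2 + 1)).val := by
  have le_mem : ∀ {q : ℕ × ℕ} (r : ℕ × ℕ), q ∈ s → r.1 ≤ q.1 → r.2 ≤ q.2 → r ∈ s :=
    fun r hq => hs _ hq r
  ext ⟨_ | i, _ | j⟩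
  · by_cases (0, 0) ∈ s <;> simp [Finset.nodup, mem_addable, hs.isYD_insert_iff, *]
  · have : (0, j + 1) ∈ s → (0, j) ∈ s := fun h => le_mem _ h le_rfl j.le_succ
    by_cases (0, j) ∈ s <;> by_cases (0, j + 1) ∈ s <;>
      simp_all [Finset.nodup, mem_addable, hs.isYD_insert_iff]
  · have : (i + 1, 0) ∈ s → (i, 0) ∈ s := fun h => le_mem _ h i.le_succ le_rfl
    by_cases (i, 0) ∈ s <;> by_cases (i + 1, 0) ∈ s <;>
      simp_all [Finset.nodup, mem_addable, hs.isYD_insert_iff]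
  · have : (i + 1, j + 1) ∈ s → (i, j + 1) ∈ s := fun h => le_mem _ h i.le_succ le_rfl
    have : (i + 1, j + 1) ∈ s → (i + 1, j) ∈ s := fun h => le_mem _ h le_rfl j.le_succ
    have : (i, j + 1) ∈ s → (i, j) ∈ s := fun h => le_mem _ h le_rfl j.le_succ
    have : (i + 1, j) ∈ s → (i, j) ∈ s := fun h => le_mem _ h i.le_succ le_rfl
    by_cases (i, j) ∈ s <;> by_cases (i, j + 1) ∈ s <;> by_cases (i + 1, j) ∈ s <;>
      by_cases (i + 1, j + 1) ∈ s <;>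
      simp_all [Finset.nodup, mem_addable, mem_removable, hs.isYD_insert_iff, hs.isYD_erase_iff]

def content (p : ℕ × ℕ) : ℤ := p.2 - p.1

/-- A discrete Green formula for functions of the content. -/
theorem sum_addable_sub_sum_removable {M : Type*} [AddCommGroup M] {s : Finset (ℕ × ℕ)}
    (hs : IsYD s) (f : ℤ → M) :
    ∑ p ∈ addable s, f (content p) - ∑ p ∈ removable s, f (content p) =
      f 0 + ∑ q ∈ s, (f (content q + 1) - 2 • f (content q) + f (content q - 1)) := by
  have h := congrArg (fun m => (m.map fun p => f (content p)).sum)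
    (addable_val_add_image_add_val hs)
  simp only [Multiset.map_add, Multiset.sum_add, Multiset.map_singleton, Multiset.sum_singleton,
    ← sum_eq_multiset_sum] at h
  rw [sum_image (fun p _ q _ h => by simpa [Prod.ext_iff] using h),
    sum_image (fun p _ q _ h => by simpa [Prod.ext_iff] using h),
    sum_image (fun p _ q _ h => by simpa [Prod.ext_iff] using h),
    sum_image (fun p _ q _ h => by simpa [Prod.ext_iff] using h)] at h
  have hdiag : ∀ q : ℕ × ℕ, content (q.1 + 1, q.2 + 1) = content q := fun q => by
    simp [content]
  have hdown : ∀ q : ℕ × ℕ, content (q.1 + 1, q.2) = content q - 1 := fun q => by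
    simp [content]; ring
  have hright : ∀ q : ℕ × ℕ, content (q.1, q.2 + 1) = content q + 1 := fun q => by
    simp [content]; ring
  simp only [hdiag, hdown, hright, show content (0, 0) = 0 from rfl] at h
  rw [eq_sub_of_add_eq (eq_sub_of_add_eq h), sum_add_distrib, sum_sub_distrib, sum_nsmul]
  abel

noncomputable def diagrams (n : ℕ) : Finset (Finset (ℕ × ℕ)) :=
  (range n ×ˢ range n).powerset.filter fun s => IsYD s ∧ s.card = n

lemma mem_diagrams {n : ℕ} {s : Finset (ℕ × ℕ)} : s ∈ diagrams n ↔ IsYD s ∧ s.card = n := by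
  refine mem_filter.trans ⟨And.right, fun h => ⟨mem_powerset.2 ?_, h⟩⟩
  exact h.2 ▸ h.1.subset_range_prod_range

theorem sum_diagrams_succ_sum_removable {M : Type*} [AddCommMonoid M] (n : ℕ)
    (g : Finset (ℕ × ℕ) → ℕ × ℕ → M) :
    ∑ s ∈ diagrams (n + 1), ∑ b ∈ removable s, g s b =
      ∑ μ ∈ diagrams n, ∑ b ∈ addable μ, g (insert b μ) b := by
  rw [sum_sigma', sum_sigma']
  refine sum_nbij' (fun x => ⟨x.1.erase x.2, x.2⟩) (fun y => ⟨insert y.2 y.1, y.2⟩)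
    ?_ ?_ ?_ ?_ ?_
  · rintro ⟨s, b⟩ hx
    simp only [mem_sigma, mem_diagrams, mem_removable, mem_addable] at hx ⊢
    obtain ⟨⟨hs, hcard⟩, hb, hyd⟩ := hx
    refine ⟨⟨hyd, ?_⟩, notMem_erase b s, by rwa [insert_erase hb]⟩
    rw [card_erase_of_mem hb, hcard, Nat.add_sub_cancel]
  · rintro ⟨μ, b⟩ hy
    simp only [mem_sigma, mem_diagrams, mem_removable, mem_addable] at hy ⊢
    obtain ⟨⟨hμ, hcard⟩, hb, hyd⟩ := hy
    refine ⟨⟨hyd, by rw [card_insert_of_notMem hb, hcard]⟩, mem_insert_self b μ, ?_⟩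
    rwa [erase_insert hb]
  · rintro ⟨s, b⟩ hx
    simp only [mem_sigma, mem_removable] at hx
    simp only [insert_erase hx.2.1]
  · rintro ⟨μ, b⟩ hy
    simp only [mem_sigma, mem_addable] at hy
    simp only [erase_insert hy.2.1]
  · rintro ⟨s, b⟩ hx
    simp only [mem_sigma, mem_removable] at hx
    simp only [insert_erase hx.2.1]

lemma diagrams_zero : diagrams 0 = {∅} := by
  ext s
  rw [mem_diagrams, mem_singleton, card_eq_zero]
  exact ⟨And.right, fun h => ⟨h ▸ fun p hp => absurd hp (notMem_empty p), h⟩⟩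

def contentProd {R : Type*} [CommMonoid R] (f : ℤ → R) (s : Finset (ℕ × ℕ)) : R :=
  ∏ p ∈ s, f (content p)

lemma contentProd_insert {R : Type*} [CommMonoid R] (f : ℤ → R) {s : Finset (ℕ × ℕ)}
    {b : ℕ × ℕ} (hb : b ∉ s) : contentProd f (insert b s) = f (content b) * contentProd f s :=
  prod_insert hb

section SecondDifference

variable {R : Type*} [CommRing R] {f : ℤ → R} {a : R}

theorem sum_addable_sub_sum_removable_of_secondDiff
    (hf : ∀ k, f (k + 1) - 2 * f k + f (k - 1) = 2 * a) {s : Finset (ℕ × ℕ)} (hs : IsYD s) :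
    ∑ p ∈ addable s, f (content p) - ∑ p ∈ removable s, f (content p) =
      f 0 + 2 * a * s.card := by
  simp only [sum_addable_sub_sum_removable hs, nsmul_eq_mul, Nat.cast_ofNat, hf, sum_const]
  ring

lemma card_mul_dimYD_eq_card_mul_sum_removable {μ : Finset (ℕ × ℕ)} :
    (μ.card : R) * dimYD μ = μ.card * ∑ b ∈ removable μ, (dimYD (μ.erase b) : R) := by
  rcases μ.eq_empty_or_nonempty with rfl | hne
  · simp
  · rw [dimYD_eq_sum_removable hne, Nat.cast_sum]

theorem sum_addable_mul_dimYD_insert_step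
    (hf : ∀ k, f (k + 1) - 2 * f k + f (k - 1) = 2 * a) {μ : Finset (ℕ × ℕ)} (hμ : IsYD μ)
    (ih : ∀ b' ∈ removable μ,
      ∑ b ∈ addable (μ.erase b'), f (content b) * dimYD (insert b (μ.erase b')) =
        μ.card * (f 0 + a * (μ.card - 1)) * dimYD (μ.erase b')) :
    ∑ b ∈ addable μ, f (content b) * dimYD (insert b μ) =
      (μ.card + 1) * (f 0 + a * μ.card) * dimYD μ := by
  have hinner : ∀ b' ∈ removable μ,
      ∑ b ∈ (addable (μ.erase b')).erase b', f (content b) * dimYD (insert b (μ.erase b')) =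
        μ.card * (f 0 + a * (μ.card - 1)) * dimYD (μ.erase b') - f (content b') * dimYD μ := by
    intro b' hb'
    obtain ⟨hb'μ, hyd⟩ := mem_removable.1 hb'
    have hb'_add : b' ∈ addable (μ.erase b') :=
      mem_addable.2 ⟨notMem_erase b' μ, by rwa [insert_erase hb'μ]⟩
    rw [sum_erase_eq_sub hb'_add, ih b' hb', insert_erase hb'μ]
  calc ∑ b ∈ addable μ, f (content b) * dimYD (insert b μ)
      = (∑ b ∈ addable μ, f (content b)) * dimYD μ + ∑ b ∈ addable μ,
          ∑ b' ∈ (removable (insert b μ)).erase b,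
            f (content b) * dimYD (insert b (μ.erase b')) := by
        rw [sum_mul, ← sum_add_distrib]
        refine sum_congr rfl fun b hb => ?_
        rw [dimYD_insert hμ hb, Nat.cast_add, Nat.cast_sum, mul_add, mul_sum]
    _ = (∑ b ∈ addable μ, f (content b)) * dimYD μ + ∑ b' ∈ removable μ,
          ∑ b ∈ (addable (μ.erase b')).erase b',
            f (content b) * dimYD (insert b (μ.erase b')) := by
        rw [sum_comm' (mem_addable_and_mem_removable_insert_iff hμ)]
    _ = (∑ b ∈ addable μ, f (content b) - ∑ b' ∈ removable μ, f (content b')) * dimYD μ +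
          μ.card * (f 0 + a * (μ.card - 1)) * ∑ b' ∈ removable μ, (dimYD (μ.erase b') : R) := by
        rw [sum_congr rfl hinner, sum_sub_distrib, ← mul_sum, ← sum_mul]
        ring
    _ = (μ.card + 1) * (f 0 + a * μ.card) * dimYD μ := by
        rw [sum_addable_sub_sum_removable_of_secondDiff hf hμ]
        linear_combination (-(f 0 + a * (μ.card - 1))) *
          card_mul_dimYD_eq_card_mul_sum_removable (R := R) (μ := μ)

theorem sum_addable_mul_dimYD_insert
    (hf : ∀ k, f (k + 1) - 2 * f k + f (k - 1) = 2 * a) {μ : Finset (ℕ × ℕ)} (hμ : IsYD μ) :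
    ∑ b ∈ addable μ, f (content b) * dimYD (insert b μ) =
      (μ.card + 1) * (f 0 + a * μ.card) * dimYD μ := by
  induction hn : μ.card generalizing μ with
  | zero =>
    refine hn ▸ sum_addable_mul_dimYD_insert_step hf hμ fun b' hb' => ?_
    exact absurd (card_eq_zero.1 hn ▸ (mem_removable.1 hb').1) (notMem_empty b')
  | succ n ih =>
    refine hn ▸ sum_addable_mul_dimYD_insert_step hf hμ fun b' hb' => ?_
    obtain ⟨hb'μ, hyd⟩ := mem_removable.1 hb'
    have hcard : (μ.erase b').card = n := by rw [card_erase_of_mem hb'μ, hn, Nat.add_sub_cancel]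
    rw [ih hyd hcard, hn]
    push_cast
    ring

theorem sum_contentProd_mul_dimYD_sq
    (hf : ∀ k, f (k + 1) - 2 * f k + f (k - 1) = 2 * a) (n : ℕ) :
    ∑ s ∈ diagrams n, contentProd f s * (dimYD s : R) ^ 2 =
      n.factorial * ∏ k ∈ range n, (f 0 + a * k) := by
  induction n with
  | zero => simp [diagrams_zero, contentProd, dimYD, skewDim]
  | succ n ih =>
    calc ∑ s ∈ diagrams (n + 1), contentProd f s * (dimYD s : R) ^ 2
        = ∑ s ∈ diagrams (n + 1), ∑ b ∈ removable s,
            contentProd f s * dimYD s * dimYD (s.erase b) := by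
          refine sum_congr rfl fun s hs => ?_
          have hne : s.Nonempty := card_pos.1 ((mem_diagrams.1 hs).2 ▸ n.succ_pos)
          rw [← mul_sum, sq, ← mul_assoc, ← Nat.cast_sum, ← dimYD_eq_sum_removable hne]
      _ = ∑ μ ∈ diagrams n, contentProd f μ * dimYD μ *
            ∑ b ∈ addable μ, f (content b) * dimYD (insert b μ) := by
          rw [sum_diagrams_succ_sum_removable]
          refine sum_congr rfl fun μ _ => ?_
          rw [mul_sum]
          refine sum_congr rfl fun b hb => ?_
          have hbμ : b ∉ μ := (mem_addable.1 hb).1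
          rw [erase_insert hbμ, contentProd_insert f hbμ]
          ring
      _ = (n + 1) * (f 0 + a * n) * ∑ μ ∈ diagrams n, contentProd f μ * (dimYD μ : R) ^ 2 := by
          rw [mul_sum]
          refine sum_congr rfl fun μ hμ => ?_
          obtain ⟨hμ, hcard⟩ := mem_diagrams.1 hμ
          rw [sum_addable_mul_dimYD_insert hf hμ, hcard]
          ring
      _ = (n + 1).factorial * ∏ k ∈ range (n + 1), (f 0 + a * k) := by
          rw [ih, prod_range_succ, Nat.factorial_succ]
          push_cast
          ring

end SecondDifference

lemma ascPochhammer_eval_eq_prod_range {R : Type*} [CommSemiring R] (n : ℕ) (r : R) :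
    (ascPochhammer R n).eval r = ∏ k ∈ range n, (r + k) := by
  induction n with
  | zero => simp
  | succ n ih => rw [ascPochhammer_succ_eval, ih, prod_range_succ]

lemma contentPoch_mul_contentPoch (z z' : ℂ) (s : Finset (ℕ × ℕ)) :
    contentPoch z s * contentPoch z' s = contentProd (fun k => (z + k) * (z' + k)) s := by
  rw [contentPoch, contentPoch, ← prod_mul_distrib]
  refine prod_congr rfl fun p _ => ?_
  simp only [content, Int.cast_sub, Int.cast_natCast, add_sub_assoc]

/-- For every `n ≥ 0` and complex `z, z'`:
`∑_{λ ⊢ n} (z)_λ (z')_λ (dim λ)² / (n!)² = (zz')_n / n!`,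
the sum being over all Young diagrams with `n` boxes (all of which fit inside the
`n × n` square). -/
theorem zmeasure_normalization (n : ℕ) (z z' : ℂ) :
    ∑ s ∈ (Finset.range n ×ˢ Finset.range n).powerset.filter
        (fun s => IsYD s ∧ s.card = n),
      contentPoch z s * contentPoch z' s * ((skewDim s.card ∅ s : ℂ)) ^ 2 /
        ((Nat.factorial n : ℂ)) ^ 2 =
      (ascPochhammer ℂ n).eval (z * z') / (Nat.factorial n : ℂ) := by
  have hsum := sum_contentProd_mul_dimYD_sq (f := fun k => (z + k) * (z' + k)) (a := 1)
    (fun k => by push_cast; ring) n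
  simp only [← contentPoch_mul_contentPoch, Int.cast_zero, add_zero, one_mul] at hsum
  have hfac : (n.factorial : ℂ) ≠ 0 := Nat.cast_ne_zero.2 n.factorial_ne_zero
  rw [← sum_div, ascPochhammer_eval_eq_prod_range]
  change (∑ s ∈ diagrams n, contentPoch z s * contentPoch z' s * (dimYD s : ℂ) ^ 2) / _ = _
  rw [hsum]
  field_simp
end
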